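/- Let F be a field, n ≥ 1, t ≥ 2, σ ∈ {1,−1}, let λB+A be a pencil of size (t+1)n×(t+1)n over F, and let L(λ) be the associated modified block Kronecker pencil. Suppose (Λ̂_t(λ)^T⊗I_n)(λB+A)(Λ̂_t(λ)⊗I_n) = [[−P, λ^t P],[λ^t P, Q(λ)]] for some invertible matrix P ∈ F^{n×n} and some n×n matrix polynomial Q(λ) of grade 2t−1. Then L(λ) is a strong linearization of the grade-2t matrix polynomial P(λ) := λ^{2t} P + Q(λ): there exist unimodular U(λ), V(λ) with U(λ)L(λ)V(λ) = diag(I_{(2t−1)n}, P(λ)), and there exist unimodular U′(λ), V′(λ) with U′(λ)(rev_1 L)(λ)V′(λ) = diag(I_{(2t−1)n}, rev_{2t} P(λ)). -/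

import Mathlib

open Polynomial Matrix
open scoped Kronecker

noncomputable section

/-- Entrywise inclusion of a constant matrix into polynomial matrices. -/
def matC {F : Type} [Field F] {m l : Type*} (M : Matrix m l F) : Matrix m l (Polynomial F) :=
  M.map fun a => (C a : Polynomial F)

/-- The pencil `λ ↦ A + λ B`, represented as a matrix over `F[λ]`. -/
def pencil {F : Type} [Field F] {m l : Type*} (A B : Matrix m l F) :
    Matrix m l (Polynomial F) :=
  matC A + (X : Polynomial F) • matC B

/-- Grade-`g` reversal `rev_g`, applied entrywise. -/
def revMat {F : Type} [Field F] {m l : Type*} (g : ℕ) (M : Matrix m l (Polynomial F)) :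
    Matrix m l (Polynomial F) :=
  M.map fun q => q.reflect g

/-- Entrywise evaluation of a polynomial matrix at a point. -/
def evalMat {F : Type} [Field F] {m l : Type*} (a : F) (M : Matrix m l (Polynomial F)) :
    Matrix m l F :=
  M.map fun q => q.eval a

/-- The matrix polynomial `P(λ) = ∑_{k=0}^d λ^k P_k` built from its coefficients. -/
def polyOfCoeffs {F : Type} [Field F] {n : ℕ} (d : ℕ) (Pc : ℕ → Matrix (Fin n) (Fin n) F) :
    Matrix (Fin n) (Fin n) (Polynomial F) :=
  ∑ k ∈ Finset.range (d + 1), (X : Polynomial F) ^ k • matC (Pc k)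

/-- The `(i,j)` block of a block-partitioned matrix. -/
def blk {α p q n m : Type*} (A : Matrix (p × n) (q × m) α) (i : p) (j : q) :
    Matrix n m α :=
  Matrix.of fun r c => A (i, r) (j, c)

/-- `Λ_s(λ) ⊗ I_n`, an `(s+1)n × n` polynomial matrix whose `i`-th block is `λ^{s-i} I_n`. -/
def Lam (F : Type) [Field F] (s n : ℕ) :
    Matrix (Fin (s+1) × Fin n) (Fin n) (Polynomial F) :=
  Matrix.of fun p c => if p.2 = c then (X : Polynomial F) ^ (s - (p.1 : ℕ)) else 0

/-- The pencil `L_s(λ) ∈ F[λ]^{s×(s+1)}` with `-1` on the diagonal and `λ` on the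
superdiagonal. -/
def Lpen (F : Type) [Field F] (s : ℕ) : Matrix (Fin s) (Fin (s+1)) (Polynomial F) :=
  Matrix.of fun i j =>
    if (j : ℕ) = (i : ℕ) then -1 else if (j : ℕ) = (i : ℕ) + 1 then X else 0

/-- The block Kronecker pencil `[[λB+A, L_s(λ)ᵀ⊗I_n],[σ L_s(λ)⊗I_n, 0]]` associated with a
pencil `M = λB+A` of size `(s+1)n × (s+1)n`. -/
def blockKron (F : Type) [Field F] (s n : ℕ) (σ : F)
    (M : Matrix (Fin (s+1) × Fin n) (Fin (s+1) × Fin n) (Polynomial F)) :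
    Matrix ((Fin (s+1) × Fin n) ⊕ (Fin s × Fin n)) ((Fin (s+1) × Fin n) ⊕ (Fin s × Fin n))
      (Polynomial F) :=
  Matrix.fromBlocks M (Lpen F s ⊗ₖ (1 : Matrix (Fin n) (Fin n) (Polynomial F)))ᵀ
    (σ • (Lpen F s ⊗ₖ (1 : Matrix (Fin n) (Fin n) (Polynomial F)))) 0

/-- `L` is a linearization of `P`: there are unimodular `U`, `V` with
`U L V = diag(I_m, P)` (up to the fixed identification of index sets). -/
def IsLinearization {F : Type} [Field F] (m : ℕ) {ι ρ : Type*} [Fintype ι] [DecidableEq ι]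
    [Fintype ρ] [DecidableEq ρ] (L : Matrix ι ι (Polynomial F))
    (P : Matrix ρ ρ (Polynomial F)) : Prop :=
  ∃ (e : (Fin m ⊕ ρ) ≃ ι) (U V : Matrix ι ι (Polynomial F)),
    IsUnit U.det ∧ IsUnit V.det ∧
      U * L * V =
        (Matrix.fromBlocks (1 : Matrix (Fin m) (Fin m) (Polynomial F)) 0 0 P).submatrix
          e.symm e.symm

/-- The block conditions `∑_{i+j=d+2-k} B_{ij} + ∑_{i+j=d+1-k} A_{ij} = P_k` for
`k = 0,…,d` (blocks are indexed here `0`-based, so `i+j` `1`-based is `i+j+2` `0`-based). -/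
def blockConds {F : Type} [Field F] {s n : ℕ} (d : ℕ) (Pc : ℕ → Matrix (Fin n) (Fin n) F)
    (A B : Matrix (Fin (s+1) × Fin n) (Fin (s+1) × Fin n) F) : Prop :=
  ∀ k, k ≤ d →
    (∑ p ∈ Finset.univ.filter
        (fun p : Fin (s+1) × Fin (s+1) => (p.1 : ℕ) + (p.2 : ℕ) + 2 + k = d + 2),
        blk B p.1 p.2) +
      (∑ p ∈ Finset.univ.filter
        (fun p : Fin (s+1) × Fin (s+1) => (p.1 : ℕ) + (p.2 : ℕ) + 2 + k = d + 1),
        blk A p.1 p.2) = Pc k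

/-- `L̂_t(λ) ⊗ I_n` (with `t = u+1`): first block column zero, remaining block columns
`L_{t-1}(λ) ⊗ I_n`; the column index is split as `Fin n ⊕ (Fin t × Fin n)`. -/
def LhatB (F : Type) [Field F] (u n : ℕ) :
    Matrix (Fin u × Fin n) (Fin n ⊕ Fin (u+1) × Fin n) (Polynomial F) :=
  Matrix.of fun p q =>
    match q with
    | Sum.inl _ => 0
    | Sum.inr c => (Lpen F u ⊗ₖ (1 : Matrix (Fin n) (Fin n) (Polynomial F))) p c

/-- The modified block Kronecker pencil `[[λB+A, L̂_t(λ)ᵀ⊗I_n],[σ L̂_t(λ)⊗I_n, 0]]`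
(with `t = u+1`). -/
def modBK (F : Type) [Field F] (u n : ℕ) (σ : F)
    (M : Matrix (Fin n ⊕ Fin (u+1) × Fin n) (Fin n ⊕ Fin (u+1) × Fin n) (Polynomial F)) :
    Matrix ((Fin n ⊕ Fin (u+1) × Fin n) ⊕ Fin u × Fin n)
      ((Fin n ⊕ Fin (u+1) × Fin n) ⊕ Fin u × Fin n) (Polynomial F) :=
  Matrix.fromBlocks M (LhatB F u n)ᵀ (σ • LhatB F u n) 0

/-- `Λ̂_t(λ) ⊗ I_n` (with `t = u+1`): the `(t+1)n × 2n` polynomial matrix whose transpose has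
block rows `(I_n, 0, …, 0)` and `(0, λ^{t-1}I_n, …, λ I_n, I_n)`. -/
def LamHatB (F : Type) [Field F] (u n : ℕ) :
    Matrix (Fin n ⊕ Fin (u+1) × Fin n) (Fin 2 × Fin n) (Polynomial F) :=
  Matrix.of fun q c =>
    match q with
    | Sum.inl r => if c.1 = 0 ∧ c.2 = r then 1 else 0
    | Sum.inr p => if c.1 = 1 ∧ c.2 = p.2 then (X : Polynomial F) ^ (u - (p.1 : ℕ)) else 0

/-- `Λ̃_t(λ) ⊗ I_n` (with `t = u+1`): the `(t+1)n × 2n` polynomial matrix whose transpose has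
block rows `(I_n, 0, …, 0)` and `(0, I_n, λ I_n, …, λ^{t-1} I_n)`. -/
def LamTildeB (F : Type) [Field F] (u n : ℕ) :
    Matrix (Fin n ⊕ Fin (u+1) × Fin n) (Fin 2 × Fin n) (Polynomial F) :=
  Matrix.of fun q c =>
    match q with
    | Sum.inl r => if c.1 = 0 ∧ c.2 = r then 1 else 0
    | Sum.inr p => if c.1 = 1 ∧ c.2 = p.2 then (X : Polynomial F) ^ (p.1 : ℕ) else 0

/-- A `2n × 2n` matrix assembled from four `n × n` blocks, indexed by `Fin 2 × Fin n`. -/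
def twoBlock {α : Type*} {n : ℕ} (W₁₁ W₁₂ W₂₁ W₂₂ : Matrix (Fin n) (Fin n) α) :
    Matrix (Fin 2 × Fin n) (Fin 2 × Fin n) α :=
  Matrix.of fun p q =>
    if p.1 = 0 then (if q.1 = 0 then W₁₁ p.2 q.2 else W₁₂ p.2 q.2)
    else (if q.1 = 0 then W₂₁ p.2 q.2 else W₂₂ p.2 q.2)

/-- `Λ_t(λ) ⊗ I_n` (with `t = u+1`), over the split row index `Fin n ⊕ (Fin t × Fin n)`:
block entries `λ^t I_n, λ^{t-1} I_n, …, λ I_n, I_n`. -/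
def LamFullB (F : Type) [Field F] (u n : ℕ) :
    Matrix (Fin n ⊕ Fin (u+1) × Fin n) (Fin n) (Polynomial F) :=
  Matrix.of fun q c =>
    match q with
    | Sum.inl r => if r = c then (X : Polynomial F) ^ (u + 1) else 0
    | Sum.inr p => if p.2 = c then (X : Polynomial F) ^ (u - (p.1 : ℕ)) else 0

/-- `N̂_t(λ) = Ĥ_t(λ) ⊗ I_n` (with `t = u+1`): `Ĥ_t ∈ F[λ]^{(t-1)×(t+1)}` has `(i,j)` entry
`λ^{i+1-j}` if `2 ≤ j ≤ i+1` and `0` otherwise. -/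
def NhatB (F : Type) [Field F] (u n : ℕ) :
    Matrix (Fin u × Fin n) (Fin n ⊕ Fin (u+1) × Fin n) (Polynomial F) :=
  Matrix.of fun p q =>
    match q with
    | Sum.inl _ => 0
    | Sum.inr c =>
        if (c.1 : ℕ) ≤ (p.1 : ℕ) ∧ p.2 = c.2 then
          (X : Polynomial F) ^ ((p.1 : ℕ) - (c.1 : ℕ)) else 0

end

/-!
Write the pencil as `L = [[M, Kᵀ], [σK, 0]]` with `K = L̂_t ⊗ I_n`. The columns of
`-N̂_tᵀ ⊗ I_n` form a right inverse of `K` and those of `Λ̂ = Λ̂_t ⊗ I_n` span its kernel, so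
`W = [-N̂ᵀ Λ̂]` is invertible with `K W = [I 0]`. Conjugating `L` by `diag(W, I)` and taking the
Schur complement of the invertible block `[[*, I], [σI, 0]]` leaves
`diag(I, Λ̂ᵀ M Λ̂) = diag(I, [[-P, λ^t P], [λ^t P, Q]])`, and a second Schur complement, at the
pivot `-P`, gives `diag(I, λ^{2t} P + Q)`.

For the reversal, `rev₁ L̂_t` is `-L̂_t` with its block order reversed, so the same argument runs
with `Λ̃_t`, the block reversal of `Λ̂_t`. Reversing the hypothesis and using
`rev_{t-1} Λ̂_t = Λ̃_t diag(λ^{t-1}, 1)` gives `Λ̃ᵀ (rev₁ M) Λ̃ = [[-λP, P], [P, rev_{2t-1} Q]]`,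
whose Schur complement at the pivot `P` is `P + λ rev_{2t-1} Q = rev_{2t} P(λ)`.
-/

section UnimodEquiv

variable {R : Type*} [CommRing R] {α β γ δ ρ : Type*}
  [Fintype α] [DecidableEq α] [Fintype β] [DecidableEq β] [Fintype γ] [DecidableEq γ]
  [Fintype δ] [DecidableEq δ] [Fintype ρ] [DecidableEq ρ]

-- Allowing different index types lets block matrices be reindexed along the way.
def UnimodEquiv (A : Matrix α α R) (B : Matrix β β R) : Prop :=
  ∃ (U : Matrix β α R) (U' : Matrix α β R) (V : Matrix α β R) (V' : Matrix β α R),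
    U * U' = 1 ∧ U' * U = 1 ∧ V * V' = 1 ∧ V' * V = 1 ∧ U * A * V = B

namespace UnimodEquiv

theorem trans {A : Matrix α α R} {B : Matrix β β R} {C : Matrix γ γ R}
    (hAB : UnimodEquiv A B) (hBC : UnimodEquiv B C) : UnimodEquiv A C := by
  obtain ⟨U₁, U₁', V₁, V₁', hU₁, hU₁', hV₁, hV₁', rfl⟩ := hAB
  obtain ⟨U₂, U₂', V₂, V₂', hU₂, hU₂', hV₂, hV₂', rfl⟩ := hBC
  refine ⟨U₂ * U₁, U₁' * U₂', V₁ * V₂, V₂' * V₁', ?_, ?_, ?_, ?_, by simp only [Matrix.mul_assoc]⟩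
  · rw [Matrix.mul_assoc, ← Matrix.mul_assoc U₁, hU₁, Matrix.one_mul, hU₂]
  · rw [Matrix.mul_assoc, ← Matrix.mul_assoc U₂', hU₂', Matrix.one_mul, hU₁']
  · rw [Matrix.mul_assoc, ← Matrix.mul_assoc V₂, hV₂, Matrix.one_mul, hV₁]
  · rw [Matrix.mul_assoc, ← Matrix.mul_assoc V₁', hV₁', Matrix.one_mul, hV₂']

theorem of_isUnit_det {A B U V : Matrix α α R} (hU : IsUnit U.det) (hV : IsUnit V.det)
    (h : U * A * V = B) : UnimodEquiv A B :=
  ⟨U, U⁻¹, V, V⁻¹, U.mul_nonsing_inv hU, U.nonsing_inv_mul hU, V.mul_nonsing_inv hV,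
    V.nonsing_inv_mul hV, h⟩

theorem submatrix (A : Matrix α α R) (e₁ e₂ : β ≃ α) : UnimodEquiv A (A.submatrix e₁ e₂) := by
  refine ⟨(1 : Matrix α α R).submatrix e₁ id, (1 : Matrix α α R).submatrix id e₁,
    (1 : Matrix α α R).submatrix id e₂, (1 : Matrix α α R).submatrix e₂ id, ?_, ?_, ?_, ?_, ?_⟩
  · ext; simp [Matrix.mul_apply, Matrix.one_apply]
  · simp [Matrix.submatrix_mul_equiv]
  · simp [Matrix.submatrix_mul_equiv]
  · ext; simp [Matrix.mul_apply, Matrix.one_apply]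
  · ext; simp [Matrix.mul_apply, Matrix.one_apply]

theorem fromBlocks_schur {A A' : Matrix α α R} (B : Matrix α β R) (C : Matrix β α R)
    (D : Matrix β β R) (hA : A' * A = 1) :
    UnimodEquiv (fromBlocks A B C D) (fromBlocks (1 : Matrix α α R) 0 0 (D - C * A' * B)) := by
  refine of_isUnit_det (U := fromBlocks A' 0 (-(C * A')) 1)
    (V := fromBlocks 1 (-(A' * B)) 0 1) ?_ (by simp) ?_
  · rw [Matrix.det_fromBlocks_zero₁₂, Matrix.det_one, mul_one]
    exact Matrix.isUnit_det_of_right_inverse hA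
  · simp [Matrix.fromBlocks_multiply, Matrix.mul_assoc, hA, sub_eq_add_neg, add_comm]

theorem fromBlocks_one_congr {Z : Matrix α α R} {Z' : Matrix β β R} (h : UnimodEquiv Z Z') :
    UnimodEquiv (fromBlocks (1 : Matrix γ γ R) 0 0 Z) (fromBlocks (1 : Matrix γ γ R) 0 0 Z') := by
  obtain ⟨U, U', V, V', hU, hU', hV, hV', rfl⟩ := h
  refine ⟨fromBlocks 1 0 0 U, fromBlocks 1 0 0 U', fromBlocks 1 0 0 V,
    fromBlocks 1 0 0 V', ?_, ?_, ?_, ?_, ?_⟩ <;>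
  simp [Matrix.fromBlocks_multiply, hU, hU', hV, hV', Matrix.fromBlocks_one]

theorem fromBlocks_one_assoc (P : Matrix ρ ρ R) :
    UnimodEquiv (fromBlocks (1 : Matrix γ γ R) 0 0 (fromBlocks (1 : Matrix δ δ R) 0 0 P))
      (fromBlocks (1 : Matrix (γ ⊕ δ) (γ ⊕ δ) R) 0 0 P) := by
  convert submatrix _ (Equiv.sumAssoc γ δ ρ) (Equiv.sumAssoc γ δ ρ)
  ext ((i | i) | i) ((j | j) | j) <;> simp [Matrix.one_apply]

end UnimodEquiv

theorem isLinearization_of_unimodEquiv {F : Type} [Field F] {m : ℕ} {ι : Type*} [Fintype ι]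
    [DecidableEq ι] {L : Matrix ι ι (Polynomial F)} {P : Matrix ρ ρ (Polynomial F)}
    (hγ : Fintype.card γ = m) (hι : Fintype.card ι = m + Fintype.card ρ)
    (h : UnimodEquiv L (fromBlocks (1 : Matrix γ γ (Polynomial F)) 0 0 P)) :
    IsLinearization m L P := by
  let f : γ ≃ Fin m := Fintype.equivFinOfCardEq hγ
  let e : (Fin m ⊕ ρ) ≃ ι := Fintype.equivOfCardEq (by simp [hι])
  have hreindex : UnimodEquiv (fromBlocks (1 : Matrix γ γ (Polynomial F)) 0 0 P)
      ((fromBlocks (1 : Matrix (Fin m) (Fin m) (Polynomial F)) 0 0 P).submatrix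
        e.symm e.symm) := by
    convert UnimodEquiv.submatrix _ (e.symm.trans (Equiv.sumCongr f.symm (Equiv.refl ρ)))
      (e.symm.trans (Equiv.sumCongr f.symm (Equiv.refl ρ))) using 1
    refine Matrix.ext fun i j => ?_
    simp only [Matrix.submatrix_apply, Equiv.trans_apply]
    rcases e.symm i with i | i <;> rcases e.symm j with j | j <;> simp [Matrix.one_apply]
  obtain ⟨U, _, V, _, hU, -, -, hV', hL⟩ := h.trans hreindex
  exact ⟨e, U, V, Matrix.isUnit_det_of_right_inverse hU, Matrix.isUnit_det_of_left_inverse hV', hL⟩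

end UnimodEquiv

section BlockKronecker

variable {R : Type*} [CommRing R] {ι ι' ρ : Type*} [Fintype ι] [DecidableEq ι]
  [Fintype ι'] [DecidableEq ι'] [Fintype ρ] [DecidableEq ρ]

theorem UnimodEquiv.fromBlocks_conj (M : Matrix ι ι R) (K : Matrix ι' ι R) (σ : R)
    {W : Matrix ι ρ R} {W' : Matrix ρ ι R} (hW'W : W' * W = 1) (hWW' : W * W' = 1) :
    UnimodEquiv (fromBlocks M Kᵀ (σ • K) 0) (fromBlocks (Wᵀ * M * W) (K * W)ᵀ (σ • (K * W)) 0) := by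
  refine ⟨fromBlocks Wᵀ 0 0 1, fromBlocks W'ᵀ 0 0 1, fromBlocks W 0 0 1, fromBlocks W' 0 0 1,
    ?_, ?_, ?_, ?_, ?_⟩
  · simp [Matrix.fromBlocks_multiply, ← Matrix.transpose_mul, hW'W, Matrix.fromBlocks_one]
  · simp [Matrix.fromBlocks_multiply, ← Matrix.transpose_mul, hWW', Matrix.fromBlocks_one]
  · simp [Matrix.fromBlocks_multiply, hWW', Matrix.fromBlocks_one]
  · simp [Matrix.fromBlocks_multiply, hW'W, Matrix.fromBlocks_one]
  · simp [Matrix.fromBlocks_multiply, Matrix.transpose_mul, Matrix.smul_mul]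

theorem UnimodEquiv.fromBlocks_fromCols_one_zero (X₁₁ : Matrix ι' ι' R) (X₁₂ : Matrix ι' ρ R)
    (X₂₁ : Matrix ρ ι' R) (Z : Matrix ρ ρ R) {σ : R} (hσ : IsUnit σ) :
    UnimodEquiv
      (fromBlocks (fromBlocks X₁₁ X₁₂ X₂₁ Z) (fromCols (1 : Matrix ι' ι' R) (0 : Matrix ι' ρ R))ᵀ
        (σ • fromCols (1 : Matrix ι' ι' R) (0 : Matrix ι' ρ R)) 0)
      (fromBlocks (1 : Matrix (ι' ⊕ ι') (ι' ⊕ ι') R) 0 0 Z) := by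
  -- regroup so that the invertible block `[[X₁₁, 1], [σ, 0]]` becomes the pivot
  let φ : (ι' ⊕ ι') ⊕ ρ ≃ (ι' ⊕ ρ) ⊕ ι' := (Equiv.sumAssoc _ _ _).trans
    ((Equiv.sumCongr (Equiv.refl _) (Equiv.sumComm _ _)).trans (Equiv.sumAssoc _ _ _).symm)
  refine (submatrix _ φ φ).trans ?_
  have hregroup : (fromBlocks (fromBlocks X₁₁ X₁₂ X₂₁ Z) (fromCols (1 : Matrix ι' ι' R) 0)ᵀ
      (σ • fromCols (1 : Matrix ι' ι' R) (0 : Matrix ι' ρ R)) 0).submatrix φ φ =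
      fromBlocks (fromBlocks X₁₁ 1 (σ • 1) 0) (fromRows X₁₂ 0) (fromCols X₂₁ 0) Z := by
    ext ((i | i) | i) ((j | j) | j) <;> simp [φ, Matrix.one_apply, eq_comm]
  obtain ⟨τ, hστ⟩ := hσ.exists_right_inv
  have hpivot : fromBlocks 0 (τ • 1) 1 (-(τ • X₁₁)) * fromBlocks X₁₁ 1 (σ • 1) 0 = 1 := by
    simp [Matrix.fromBlocks_multiply, smul_smul, hστ, Matrix.fromBlocks_one]
  rw [hregroup]
  simpa [Matrix.fromCols_mul_fromBlocks, Matrix.fromCols_mul_fromRows] using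
    fromBlocks_schur (fromRows X₁₂ 0) (fromCols X₂₁ 0) Z hpivot

theorem unimodEquiv_blockKronecker (M : Matrix ι ι R) (K : Matrix ι' ι R) (N : Matrix ι ι' R)
    (Λ : Matrix ι ρ R) (S : Matrix ρ ι R) {σ : R} (hσ : IsUnit σ) (e : ι ≃ ι' ⊕ ρ)
    (hKN : K * N = 1) (hKΛ : K * Λ = 0) (hSN : S * N = 0) (hSΛ : S * Λ = 1) :
    UnimodEquiv (fromBlocks M Kᵀ (σ • K) 0)
      (fromBlocks (1 : Matrix (ι' ⊕ ι') (ι' ⊕ ι') R) 0 0 (Λᵀ * M * Λ)) := by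
  have hSW : fromRows K S * fromCols N Λ = 1 := by
    rw [Matrix.fromRows_mul, Matrix.mul_fromCols, Matrix.mul_fromCols, hKN, hKΛ, hSN, hSΛ,
      Matrix.fromRows_fromCols_eq_fromBlocks, Matrix.fromBlocks_one]
  have hconj := UnimodEquiv.fromBlocks_conj M K σ hSW
    ((Matrix.fromCols_mul_fromRows_eq_one_comm e N Λ K S).mpr hSW)
  have hKW : K * fromCols N Λ = fromCols 1 0 := by rw [Matrix.mul_fromCols, hKN, hKΛ]
  have hWMW : (fromCols N Λ)ᵀ * M * fromCols N Λ =
      fromBlocks (Nᵀ * M * N) (Nᵀ * M * Λ) (Λᵀ * M * N) (Λᵀ * M * Λ) := by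
    rw [Matrix.transpose_fromCols, Matrix.fromRows_mul, Matrix.fromRows_mul, Matrix.mul_fromCols,
      Matrix.mul_fromCols, Matrix.fromRows_fromCols_eq_fromBlocks]
  rw [hKW, hWMW] at hconj
  exact hconj.trans (UnimodEquiv.fromBlocks_fromCols_one_zero _ _ _ _ hσ)

end BlockKronecker

section TwoBlock

variable {R : Type*} [CommRing R] {n : ℕ}

theorem UnimodEquiv.twoBlock_fromBlocks (W₁₁ W₁₂ W₂₁ W₂₂ : Matrix (Fin n) (Fin n) R) :
    UnimodEquiv (twoBlock W₁₁ W₁₂ W₂₁ W₂₂) (fromBlocks W₁₁ W₁₂ W₂₁ W₂₂) := by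
  let e : Fin n ⊕ Fin n ≃ Fin 2 × Fin n :=
    (Equiv.boolProdEquivSum (Fin n)).symm.trans (Equiv.prodCongr finTwoEquiv.symm (Equiv.refl _))
  convert UnimodEquiv.submatrix (twoBlock W₁₁ W₁₂ W₂₁ W₂₂) e e
  ext (i | i) (j | j) <;> simp [e, twoBlock, finTwoEquiv]

theorem UnimodEquiv.twoBlock_neg_smul (P Q : Matrix (Fin n) (Fin n) R) (hP : IsUnit P.det)
    (c : R) :
    UnimodEquiv (twoBlock (-P) (c • P) (c • P) Q)
      (fromBlocks (1 : Matrix (Fin n) (Fin n) R) 0 0 (c ^ 2 • P + Q)) := by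
  refine (twoBlock_fromBlocks _ _ _ _).trans ?_
  convert fromBlocks_schur (c • P) (c • P) Q (A := -P) (A' := -P⁻¹)
    (by simp [P.nonsing_inv_mul hP]) using 2
  simp [P.mul_nonsing_inv hP, smul_smul, sq, add_comm]

theorem UnimodEquiv.twoBlock_smul_neg (P Q : Matrix (Fin n) (Fin n) R) (hP : IsUnit P.det)
    (c : R) :
    UnimodEquiv (twoBlock (-(c • P)) P P Q)
      (fromBlocks (1 : Matrix (Fin n) (Fin n) R) 0 0 (P + c • Q)) := by
  refine ((twoBlock_fromBlocks _ _ _ _).trans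
    (submatrix _ (Equiv.refl _) (Equiv.sumComm _ _))).trans ?_
  convert fromBlocks_schur (-(c • P)) Q P (P.nonsing_inv_mul hP) using 2
  · simp
  · simp [Matrix.mul_assoc, P.nonsing_inv_mul hP, sub_eq_add_neg]

end TwoBlock

section LhatB

variable {F : Type} [Field F]

theorem Lpen_apply (s : ℕ) (i : Fin s) (j : Fin (s + 1)) :
    Lpen F s i j = (if j = i.castSucc then -1 else 0) + (if j = i.succ then X else 0) := by
  simp only [Lpen, Matrix.of_apply, Fin.ext_iff, Fin.val_castSucc, Fin.val_succ]
  split_ifs <;> first | omega | simp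

theorem LhatB_mul_apply {γ : Type*} (u n : ℕ)
    (A : Matrix (Fin n ⊕ Fin (u+1) × Fin n) γ (Polynomial F)) (j : Fin u) (i : Fin n) (q : γ) :
    (LhatB F u n * A) (j, i) q = -A (.inr (j.castSucc, i)) q + X * A (.inr (j.succ, i)) q := by
  simp [Matrix.mul_apply, LhatB, Lpen_apply, Matrix.one_apply, Fintype.sum_prod_type, add_mul,
    ite_mul, Finset.sum_add_distrib]

theorem LhatB_mul_NhatB_transpose (u n : ℕ) : LhatB F u n * (NhatB F u n)ᵀ = -1 := by
  ext ⟨j, i⟩ ⟨p, i'⟩ : 1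
  rw [LhatB_mul_apply]
  simp only [NhatB, Matrix.transpose_apply, Matrix.of_apply, Matrix.neg_apply, Matrix.one_apply,
    Prod.ext_iff, Fin.ext_iff, Fin.val_castSucc, Fin.val_succ]
  split_ifs <;> first
    | omega
    | (rw [show (p : ℕ) - j = (p - (j + 1)) + 1 by omega, pow_succ]; ring)
    | simp_all

theorem LhatB_mul_LamHatB (u n : ℕ) : LhatB F u n * LamHatB F u n = 0 := by
  ext ⟨j, i⟩ c : 1
  rw [LhatB_mul_apply]
  simp only [LamHatB, Matrix.of_apply, Matrix.zero_apply, Fin.val_castSucc, Fin.val_succ]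
  split_ifs
  · rw [show u - (j : ℕ) = (u - (j + 1)) + 1 by omega, pow_succ]; ring
  · ring

-- Completes `L̂_t ⊗ I_n` to a left inverse of `[-N̂_tᵀ ⊗ I_n, Λ̂_t ⊗ I_n]`.
noncomputable def LamHatSel (F : Type) [Field F] (u n : ℕ) :
    Matrix (Fin 2 × Fin n) (Fin n ⊕ Fin (u+1) × Fin n) (Polynomial F) :=
  (1 : Matrix (Fin n ⊕ Fin (u+1) × Fin n) (Fin n ⊕ Fin (u+1) × Fin n) (Polynomial F)).submatrix
    (fun p => if p.1 = 0 then .inl p.2 else .inr (Fin.last u, p.2)) id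

theorem LamHatSel_mul_apply {γ : Type*} (u n : ℕ)
    (A : Matrix (Fin n ⊕ Fin (u+1) × Fin n) γ (Polynomial F)) (k : Fin 2) (i : Fin n) (q : γ) :
    (LamHatSel F u n * A) (k, i) q =
      if k = 0 then A (.inl i) q else A (.inr (Fin.last u, i)) q := by
  split_ifs <;> simp [LamHatSel, Matrix.mul_apply, Matrix.one_apply, *]

theorem LamHatSel_mul_NhatB_transpose (u n : ℕ) : LamHatSel F u n * (NhatB F u n)ᵀ = 0 := by
  ext ⟨k, i⟩ ⟨p, i'⟩ : 1
  rw [LamHatSel_mul_apply]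
  split_ifs <;> simp [NhatB, Fin.last, Nat.not_le.mpr p.isLt]

theorem LamHatSel_mul_LamHatB (u n : ℕ) : LamHatSel F u n * LamHatB F u n = 1 := by
  ext ⟨k, i⟩ ⟨k', i'⟩ : 1
  rw [LamHatSel_mul_apply]
  fin_cases k <;> fin_cases k' <;> simp [LamHatB, Matrix.one_apply, eq_comm]

end LhatB

section BlockReversal

variable {F : Type} [Field F]

def blockRev (u n : ℕ) : Equiv.Perm (Fin n ⊕ Fin (u+1) × Fin n) :=
  Equiv.sumCongr (Equiv.refl _) (Equiv.prodCongr Fin.revPerm (Equiv.refl _))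

theorem LamTildeB_eq_submatrix (u n : ℕ) :
    LamTildeB F u n = (LamHatB F u n).submatrix (blockRev u n) id := by
  ext (r | ⟨c, i⟩) k : 1
  · simp [LamTildeB, LamHatB, blockRev]
  · simp [LamTildeB, LamHatB, blockRev, Fin.val_rev, Nat.sub_sub_self (Fin.is_le c)]

theorem revMat_one_LhatB (u n : ℕ) :
    revMat 1 (LhatB F u n) =
      -(LhatB F u n).submatrix (Equiv.prodCongr Fin.revPerm (Equiv.refl _)) (blockRev u n) := by
  ext ⟨j, i⟩ (r | ⟨c, i'⟩) : 1
  · simp [revMat, LhatB, blockRev]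
  · simp [revMat, LhatB, blockRev, Lpen_apply, Matrix.one_apply, ← Fin.rev_succ,
      ← Fin.rev_castSucc]
    split_ifs <;> simp_all

end BlockReversal

section ModifiedBlockKronecker

variable {F : Type} [Field F]

theorem card_blockIndex (u n : ℕ) :
    Fintype.card (Fin n ⊕ Fin (u+1) × Fin n) = Fintype.card ((Fin u × Fin n) ⊕ Fin 2 × Fin n) := by
  simp; ring

theorem unimodEquiv_modBK (u n : ℕ) {σ : F} (hσ : σ ≠ 0)
    (M : Matrix (Fin n ⊕ Fin (u+1) × Fin n) (Fin n ⊕ Fin (u+1) × Fin n) (Polynomial F)) :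
    UnimodEquiv (modBK F u n σ M)
      (fromBlocks (1 : Matrix ((Fin u × Fin n) ⊕ (Fin u × Fin n)) _ (Polynomial F)) 0 0
        ((LamHatB F u n)ᵀ * M * LamHatB F u n)) := by
  rw [modBK, ← algebraMap_smul (Polynomial F) σ]
  exact unimodEquiv_blockKronecker M (LhatB F u n) (-(NhatB F u n)ᵀ) (LamHatB F u n)
    (LamHatSel F u n) (hσ.isUnit.map _)
    (Fintype.equivOfCardEq (card_blockIndex u n)) (by simp [LhatB_mul_NhatB_transpose])
    (LhatB_mul_LamHatB u n) (by simp [LamHatSel_mul_NhatB_transpose]) (LamHatSel_mul_LamHatB u n)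

theorem revMat_modBK (u n : ℕ) (σ : F)
    (M : Matrix (Fin n ⊕ Fin (u+1) × Fin n) (Fin n ⊕ Fin (u+1) × Fin n) (Polynomial F)) :
    revMat 1 (modBK F u n σ M) =
      fromBlocks (revMat 1 M) (revMat 1 (LhatB F u n))ᵀ (σ • revMat 1 (LhatB F u n)) 0 := by
  simp only [modBK, revMat, Matrix.fromBlocks_map, Matrix.transpose_map]
  congr 1
  ext i j : 1; simp [Polynomial.smul_eq_C_mul, Polynomial.reflect_C_mul]

theorem unimodEquiv_revMat_modBK (u n : ℕ) {σ : F} (hσ : σ ≠ 0)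
    (M : Matrix (Fin n ⊕ Fin (u+1) × Fin n) (Fin n ⊕ Fin (u+1) × Fin n) (Polynomial F)) :
    UnimodEquiv (revMat 1 (modBK F u n σ M))
      (fromBlocks (1 : Matrix ((Fin u × Fin n) ⊕ (Fin u × Fin n)) _ (Polynomial F)) 0 0
        ((LamTildeB F u n)ᵀ * revMat 1 M * LamTildeB F u n)) := by
  rw [revMat_modBK, ← algebraMap_smul (Polynomial F) σ]
  exact unimodEquiv_blockKronecker _ _
    ((NhatB F u n)ᵀ.submatrix (blockRev u n) (Equiv.prodCongr Fin.revPerm (Equiv.refl _))) _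
    ((LamHatSel F u n).submatrix id (blockRev u n)) (hσ.isUnit.map _)
    (Fintype.equivOfCardEq (card_blockIndex u n))
    (by rw [revMat_one_LhatB, Matrix.neg_mul, Matrix.submatrix_mul_equiv,
      LhatB_mul_NhatB_transpose, Matrix.submatrix_neg, Pi.neg_apply, Pi.neg_apply,
      Matrix.submatrix_one_equiv, neg_neg])
    (by simp [revMat_one_LhatB, LamTildeB_eq_submatrix, LhatB_mul_LamHatB])
    (by simp [LamHatSel_mul_NhatB_transpose])
    (by simp [LamTildeB_eq_submatrix, LamHatSel_mul_LamHatB])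

end ModifiedBlockKronecker

section Reversal

variable {F : Type} [Field F] {α β γ : Type*}

theorem reflect_sum (N : ℕ) (s : Finset α) (f : α → Polynomial F) :
    (∑ i ∈ s, f i).reflect N = ∑ i ∈ s, (f i).reflect N :=
  map_sum (AddMonoidHom.mk' (Polynomial.reflect N) fun p q => Polynomial.reflect_add p q N) f s

theorem revMat_mul [Fintype β] {a b : ℕ} (M : Matrix α β (Polynomial F))
    (N : Matrix β γ (Polynomial F)) (hM : ∀ i j, (M i j).natDegree ≤ a)
    (hN : ∀ i j, (N i j).natDegree ≤ b) :
    revMat (a + b) (M * N) = revMat a M * revMat b N := by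
  ext i j : 1
  simp only [revMat, Matrix.map_apply, Matrix.mul_apply, reflect_sum]
  exact Finset.sum_congr rfl fun k _ => Polynomial.reflect_mul _ _ (hM i k) (hN k j)

theorem natDegree_mul_apply_le [Fintype β] {a b : ℕ} (M : Matrix α β (Polynomial F))
    (N : Matrix β γ (Polynomial F)) (hM : ∀ i j, (M i j).natDegree ≤ a)
    (hN : ∀ i j, (N i j).natDegree ≤ b) (i : α) (j : γ) :
    ((M * N) i j).natDegree ≤ a + b :=
  Polynomial.natDegree_sum_le_of_forall_le _ _ fun k _ =>
    Polynomial.natDegree_mul_le.trans (add_le_add (hM i k) (hN k j))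

theorem pencil_apply (A B : Matrix α β F) (i : α) (j : β) :
    pencil A B i j = C (A i j) + X * C (B i j) := by
  simp [pencil, matC]

theorem natDegree_pencil_apply_le (A B : Matrix α β F) (i : α) (j : β) :
    (pencil A B i j).natDegree ≤ 1 := by
  rw [pencil_apply]
  refine (Polynomial.natDegree_add_le _ _).trans (max_le (by simp) ?_)
  exact Polynomial.natDegree_mul_le.trans (by simp)

theorem revMat_pencil (A B : Matrix α β F) : revMat 1 (pencil A B) = pencil B A := by
  ext i j : 1
  simp only [revMat, Matrix.map_apply, pencil_apply, Polynomial.reflect_add, Polynomial.reflect_C,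
    mul_comm X (C _), Polynomial.reflect_C_mul, Polynomial.reflect_one_X]
  ring

theorem natDegree_LamHatB_apply_le (u n : ℕ) (q : Fin n ⊕ Fin (u+1) × Fin n) (c : Fin 2 × Fin n) :
    (LamHatB F u n q c).natDegree ≤ u := by
  rcases q with r | p <;> simp only [LamHatB, Matrix.of_apply] <;> split_ifs <;> simp

theorem revMat_LamHatB (u n : ℕ) :
    revMat u (LamHatB F u n) = LamTildeB F u n *
      diagonal fun p : Fin 2 × Fin n => if p.1 = 0 then (X : Polynomial F) ^ u else 1 := by
  ext (r | p) c : 1 <;> simp only [revMat, LamHatB, LamTildeB, Matrix.map_apply, Matrix.of_apply,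
    Matrix.mul_diagonal] <;> split_ifs <;>
    simp_all [Polynomial.reflect_monomial, Nat.sub_sub_self, Fin.is_le]

theorem revMat_X_pow_smul_matC_add (u n : ℕ) (P : Matrix (Fin n) (Fin n) F)
    (Q : Matrix (Fin n) (Fin n) (Polynomial F)) (hQ : ∀ i j, (Q i j).natDegree ≤ 2 * (u + 1) - 1) :
    revMat (2 * (u + 1)) ((X : Polynomial F) ^ (2 * (u + 1)) • matC P + Q) =
      matC P + (X : Polynomial F) • revMat (2 * u + 1) Q := by
  ext i j : 1
  have hQ' : (Q i j).natDegree ≤ 2 * u + 1 := (hQ i j).trans (by omega)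
  have hrev := Polynomial.reflect_mul (Q i j) 1 hQ' (by simp : (1 : Polynomial F).natDegree ≤ 1)
  simp only [revMat, matC, Matrix.map_apply, Matrix.add_apply, Matrix.smul_apply, smul_eq_mul,
    Polynomial.reflect_add, mul_comm (X ^ _) (C _), Polynomial.reflect_C_mul_X_pow,
    Polynomial.revAt_le le_rfl, Nat.sub_self, pow_zero, mul_one]
  have hX : (1 : Polynomial F).reflect 1 = X := by simp
  rw [show 2 * (u + 1) = 2 * u + 1 + 1 by ring, ← mul_one (Q i j), hrev, hX, mul_one, mul_comm]

theorem diagonal_mul_mul_diagonal_cancel {R : Type*} [CommRing R] [IsDomain R] [Fintype α]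
    [DecidableEq α] {d : α → R} (hd : ∀ i, d i ≠ 0) {M N : Matrix α α R}
    (h : diagonal d * M * diagonal d = diagonal d * N * diagonal d) :
    M = N := by
  ext i j
  have hij := congrFun₂ h i j
  simp only [Matrix.mul_diagonal, Matrix.diagonal_mul] at hij
  exact mul_left_cancel₀ (hd i) (mul_right_cancel₀ (hd j) hij)

theorem LamTildeB_transpose_mul_pencil_mul (u n : ℕ)
    (A B : Matrix (Fin n ⊕ Fin (u+1) × Fin n) (Fin n ⊕ Fin (u+1) × Fin n) F)
    (P : Matrix (Fin n) (Fin n) F) (Q : Matrix (Fin n) (Fin n) (Polynomial F))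
    (h : (LamHatB F u n)ᵀ * pencil A B * LamHatB F u n =
      twoBlock (-(matC P)) ((X : Polynomial F) ^ (u+1) • matC P)
        ((X : Polynomial F) ^ (u+1) • matC P) Q) :
    (LamTildeB F u n)ᵀ * pencil B A * LamTildeB F u n =
      twoBlock (-((X : Polynomial F) • matC P)) (matC P) (matC P) (revMat (2 * u + 1) Q) := by
  have hrev := congrArg (revMat (u + 1 + u)) h
  have hdegT : ∀ i j, ((LamHatB F u n)ᵀ i j).natDegree ≤ u :=
    fun i j => natDegree_LamHatB_apply_le u n j i
  rw [revMat_mul _ _ (natDegree_mul_apply_le (LamHatB F u n)ᵀ _ hdegT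
      (natDegree_pencil_apply_le A B)) (natDegree_LamHatB_apply_le u n),
    revMat_mul _ _ hdegT (natDegree_pencil_apply_le A B),
    revMat_pencil, show revMat u (LamHatB F u n)ᵀ = (revMat u (LamHatB F u n))ᵀ from rfl,
    revMat_LamHatB, Matrix.transpose_mul, Matrix.diagonal_transpose,
    show u + 1 + u = 2 * u + 1 by ring] at hrev
  set d : Fin 2 × Fin n → Polynomial F := fun p => if p.1 = 0 then X ^ u else 1
  refine diagonal_mul_mul_diagonal_cancel (d := d) (fun p => by simp [d]; split_ifs <;> simp)
    ((Eq.trans (by simp only [Matrix.mul_assoc]) hrev).trans ?_)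
  have hrevAt : Polynomial.revAt (2 * u + 1) (u + 1) = u := by
    rw [Polynomial.revAt_le (by omega)]; omega
  ext ⟨k, i⟩ ⟨k', j⟩ : 1
  fin_cases k <;> fin_cases k' <;>
    simp [revMat, twoBlock, d, matC, Matrix.mul_diagonal, Matrix.diagonal_mul, hrevAt,
      Polynomial.reflect_C]
  ring

end Reversal

theorem isUnit_det_matC {F : Type} [Field F] {n : ℕ} {P : Matrix (Fin n) (Fin n) F}
    (hP : IsUnit P.det) : IsUnit (matC P).det := by
  rw [show (matC P).det = C P.det from (RingHom.map_det C P).symm]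
  exact Polynomial.isUnit_C.mpr hP

theorem stmt_10_general {F : Type} [Field F] (n u : ℕ)
    (σ : F) (hσ : σ = 1 ∨ σ = -1)
    (A B : Matrix (Fin n ⊕ Fin (u+1) × Fin n) (Fin n ⊕ Fin (u+1) × Fin n) F)
    (Pm : Matrix (Fin n) (Fin n) F) (hP : IsUnit Pm.det)
    (Qm : Matrix (Fin n) (Fin n) (Polynomial F))
    (hQ : ∀ i j, (Qm i j).natDegree ≤ 2*(u+1) - 1)
    (hcond : (LamHatB F u n)ᵀ * pencil A B * LamHatB F u n =
      twoBlock (-(matC Pm)) ((X : Polynomial F) ^ (u+1) • matC Pm)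
        ((X : Polynomial F) ^ (u+1) • matC Pm) Qm) :
    IsLinearization ((2*(u+1) - 1)*n) (modBK F u n σ (pencil A B))
        ((X : Polynomial F) ^ (2*(u+1)) • matC Pm + Qm) ∧
      IsLinearization ((2*(u+1) - 1)*n) (revMat 1 (modBK F u n σ (pencil A B)))
        (revMat (2*(u+1)) ((X : Polynomial F) ^ (2*(u+1)) • matC Pm + Qm)) := by
  have hσ0 : σ ≠ 0 := by rcases hσ with rfl | rfl <;> simp
  have hm : Fintype.card (((Fin u × Fin n) ⊕ (Fin u × Fin n)) ⊕ Fin n) = (2*(u+1) - 1)*n := by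
    simp [show 2 * (u + 1) - 1 = 2 * u + 1 by omega]; ring
  have hι : Fintype.card ((Fin n ⊕ Fin (u+1) × Fin n) ⊕ Fin u × Fin n) =
      (2*(u+1) - 1)*n + Fintype.card (Fin n) := by
    simp [show 2 * (u + 1) - 1 = 2 * u + 1 by omega]; ring
  constructor
  · refine isLinearization_of_unimodEquiv hm hι ((unimodEquiv_modBK u n hσ0 _).trans ?_)
    rw [hcond, show 2 * (u + 1) = (u + 1) * 2 by ring, pow_mul]
    exact (UnimodEquiv.fromBlocks_one_congr
      (UnimodEquiv.twoBlock_neg_smul _ _ (isUnit_det_matC hP) _)).trans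
      (UnimodEquiv.fromBlocks_one_assoc _)
  · refine isLinearization_of_unimodEquiv hm hι ((unimodEquiv_revMat_modBK u n hσ0 _).trans ?_)
    rw [revMat_pencil, LamTildeB_transpose_mul_pencil_mul u n A B Pm Qm hcond,
      revMat_X_pow_smul_matC_add u n Pm Qm hQ]
    exact (UnimodEquiv.fromBlocks_one_congr
      (UnimodEquiv.twoBlock_smul_neg _ _ (isUnit_det_matC hP) _)).trans
      (UnimodEquiv.fromBlocks_one_assoc _)

/-- (`t = u+1 ≥ 2`.) If
`(Λ̂_t(λ)ᵀ⊗I_n)(λB+A)(Λ̂_t(λ)⊗I_n) = [[-P, λ^t P],[λ^t P, Q(λ)]]` with `P` invertible and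
`Q` of grade `2t-1`, then the modified block Kronecker pencil is a strong linearization of
the grade-`2t` matrix polynomial `P(λ) = λ^{2t} P + Q(λ)`. -/
theorem stmt_10 {F : Type} [Field F] (n u : ℕ) (hn : 0 < n) (hu : 1 ≤ u)
    (σ : F) (hσ : σ = 1 ∨ σ = -1)
    (A B : Matrix (Fin n ⊕ Fin (u+1) × Fin n) (Fin n ⊕ Fin (u+1) × Fin n) F)
    (Pm : Matrix (Fin n) (Fin n) F) (hP : IsUnit Pm.det)
    (Qm : Matrix (Fin n) (Fin n) (Polynomial F))
    (hQ : ∀ i j, (Qm i j).natDegree ≤ 2*(u+1) - 1)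
    (hcond : (LamHatB F u n)ᵀ * pencil A B * LamHatB F u n =
      twoBlock (-(matC Pm)) ((X : Polynomial F) ^ (u+1) • matC Pm)
        ((X : Polynomial F) ^ (u+1) • matC Pm) Qm) :
    IsLinearization ((2*(u+1) - 1)*n) (modBK F u n σ (pencil A B))
        ((X : Polynomial F) ^ (2*(u+1)) • matC Pm + Qm) ∧
      IsLinearization ((2*(u+1) - 1)*n) (revMat 1 (modBK F u n σ (pencil A B)))
        (revMat (2*(u+1)) ((X : Polynomial F) ^ (2*(u+1)) • matC Pm + Qm)) :=
  stmt_10_general n u σ hσ A B Pm hP Qm hQ hcond
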